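/- Sufficiency in the small phase theorem: if A is quasi-sectorial, B is semi-sectorial, and φ̄(A) + φ̄(B) < π and φ̲(A) + φ̲(B) > −π, then I + AB is invertible. -/

import Mathlib

open Matrix Complex Real

noncomputable section

/-- The numerical range (field of values) of a square complex matrix. -/
def numRange {ι : Type*} [Fintype ι] (C : Matrix ι ι ℂ) : Set ℂ :=
  {z | ∃ x : ι → ℂ, star x ⬝ᵥ x = 1 ∧ z = star x ⬝ᵥ C.mulVec x}

/-- A matrix is sectorial if 0 is not in its numerical range. -/
def Sectorial {ι : Type*} [Fintype ι] (C : Matrix ι ι ℂ) : Prop := (0 : ℂ) ∉ numRange C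

/-- A matrix is semi-sectorial if its numerical range lies in a closed half-plane
through the origin. -/
def SemiSectorial {ι : Type*} [Fintype ι] (C : Matrix ι ι ℂ) : Prop :=
  ∃ θ : ℝ, ∀ x : ι → ℂ, 0 ≤ (Complex.exp (-(θ : ℂ) * Complex.I) * (star x ⬝ᵥ C.mulVec x)).re

/-- A matrix is quasi-sectorial if it is unitarily similar to `diag(0, Cs)` with `Cs`
sectorial (equivalently, its angular numerical range is a salient cone of angle `< π`). -/
def QuasiSectorial {ι : Type*} [Fintype ι] [DecidableEq ι] (C : Matrix ι ι ℂ) : Prop :=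
  ∃ (k r : ℕ) (e : (Fin k ⊕ Fin r) ≃ ι) (U : Matrix ι ι ℂ) (Cs : Matrix (Fin r) (Fin r) ℂ),
    Uᴴ * U = 1 ∧ U * Uᴴ = 1 ∧ Sectorial Cs ∧
    C = U * (Matrix.reindex e e (Matrix.fromBlocks 0 0 0 Cs)) * Uᴴ

/-- The canonical middle factor of the generalized sectorial decomposition:
`diag(0_{n0}, diag(e^{jθ_1},…,e^{jθ_m}), E)` where `E` consists of `p` copies of the
`2×2` block `e^{jθ0} [[1,2],[0,1]]`. -/
def gsdMat (n0 m p : ℕ) (θ : Fin m → ℝ) (θ0 : ℝ) :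
    Matrix ((Fin n0 ⊕ Fin m) ⊕ (Fin 2 × Fin p)) ((Fin n0 ⊕ Fin m) ⊕ (Fin 2 × Fin p)) ℂ :=
  Matrix.fromBlocks
    (Matrix.fromBlocks 0 0 0 (Matrix.diagonal fun i => Complex.exp ((θ i : ℂ) * Complex.I)))
    0 0
    (Matrix.blockDiagonal fun _ : Fin p => Complex.exp ((θ0 : ℂ) * Complex.I) • (!![1, 2; 0, 1] : Matrix (Fin 2) (Fin 2) ℂ))

/-- `HasPhases C φ` says that `φ` (nonincreasing, of length `r = rank C`) is a vector of
phases of the semi-sectorial matrix `C`, arising from a generalized sectorial decomposition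
`C = Tᴴ (diag(0, D, E)) T`: the entries of `φ` are the angles `θ_1 ≥ … ≥ θ_m` of `D`
together with `p` copies of each of `θ0 ± π/2`. -/
def HasPhases {ι : Type*} [Fintype ι] [DecidableEq ι] (C : Matrix ι ι ℂ) {r : ℕ}
    (φ : Fin r → ℝ) : Prop :=
  Antitone φ ∧
  ∃ (n0 m p : ℕ) (θ : Fin m → ℝ) (θ0 : ℝ)
    (e : ((Fin n0 ⊕ Fin m) ⊕ (Fin 2 × Fin p)) ≃ ι) (T : Matrix ι ι ℂ),
    IsUnit T.det ∧
    (∀ i, θ0 - π/2 ≤ θ i ∧ θ i ≤ θ0 + π/2) ∧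
    C = Tᴴ * (Matrix.reindex e e (gsdMat n0 m p θ θ0)) * T ∧
    Multiset.map φ Finset.univ.val =
      Multiset.map θ Finset.univ.val + Multiset.replicate p (θ0 + π/2)
        + Multiset.replicate p (θ0 - π/2)

/-- `B` is the Moore–Penrose pseudoinverse of `A`. -/
def IsMoorePenrose {k l : Type*} [Fintype k] [Fintype l]
    (A : Matrix k l ℂ) (B : Matrix l k ℂ) : Prop :=
  A * B * A = A ∧ B * A * B = B ∧ (A * B)ᴴ = A * B ∧ (B * A)ᴴ = B * A

/-- `Majorized x y` : the real vector `x` is majorized by `y`. -/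
def Majorized {r : ℕ} (x y : Fin r → ℝ) : Prop :=
  (∀ A : Finset (Fin r), ∃ B : Finset (Fin r), B.card = A.card ∧ ∑ i ∈ A, x i ≤ ∑ i ∈ B, y i)
  ∧ ∑ i, x i = ∑ i, y i


section AuxSmallPhase

open Matrix Complex Real

/-- Real part of `e^{-ix} z`. -/
def hre (x : ℝ) (z : ℂ) : ℝ := (Complex.exp (-(x : ℂ) * Complex.I) * z).re

/-- The angular cone with angles in `[α, β]`, as three half-plane conditions. -/
def InCone (α β : ℝ) (z : ℂ) : Prop :=
  0 ≤ hre (β - π/2) z ∧ 0 ≤ hre (α + π/2) z ∧ 0 ≤ hre ((α + β)/2) z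

lemma hre_ray (x t θ : ℝ) :
    hre x ((t : ℂ) * Complex.exp ((θ : ℂ) * Complex.I)) = t * Real.cos (θ - x) := by
  have e1 : Complex.exp (-(x:ℂ) * Complex.I) * Complex.exp ((θ:ℂ) * Complex.I)
      = Complex.exp (((θ - x : ℝ) : ℂ) * Complex.I) := by
    rw [← Complex.exp_add]; congr 1; push_cast; ring
  unfold hre
  rw [mul_left_comm, e1, Complex.re_ofReal_mul, Complex.exp_ofReal_mul_I_re]

lemma hre_exp_mul (x : ℝ) (s : ℂ) :
    hre x (Complex.exp ((x : ℂ) * Complex.I) * s) = s.re := by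
  unfold hre
  rw [← mul_assoc, ← Complex.exp_add]
  simp

lemma hre_sum {γ : Type*} (s : Finset γ) (x : ℝ) (f : γ → ℂ) :
    hre x (∑ i ∈ s, f i) = ∑ i ∈ s, hre x (f i) := by
  unfold hre; rw [Finset.mul_sum, Complex.re_sum]

lemma inCone_sum {γ : Type*} (s : Finset γ) (α β : ℝ) (f : γ → ℂ)
    (h : ∀ i ∈ s, InCone α β (f i)) : InCone α β (∑ i ∈ s, f i) := by
  refine ⟨?_, ?_, ?_⟩ <;>
  · rw [hre_sum]
    exact Finset.sum_nonneg fun i hi => by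
      first
        | exact (h i hi).1
        | exact (h i hi).2.1
        | exact (h i hi).2.2

lemma inCone_add {α β : ℝ} {z w : ℂ} (hz : InCone α β z) (hw : InCone α β w) :
    InCone α β (z + w) := by
  obtain ⟨a1, a2, a3⟩ := hz; obtain ⟨b1, b2, b3⟩ := hw
  have h : ∀ x : ℝ, hre x (z + w) = hre x z + hre x w := fun x => by
    unfold hre; rw [mul_add, Complex.add_re]
  exact ⟨by rw [h]; linarith, by rw [h]; linarith, by rw [h]; linarith⟩

lemma inCone_ray {α β θ : ℝ} (t : ℝ) (ht : 0 ≤ t) (h1 : α ≤ θ) (h2 : θ ≤ β) (hw : β - α ≤ π) :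
    InCone α β ((t : ℂ) * Complex.exp ((θ : ℂ) * Complex.I)) := by
  refine ⟨?_, ?_, ?_⟩ <;> rw [hre_ray]
  · have : Real.cos (θ - (β - π/2)) = Real.sin (β - θ) := by
      rw [show θ - (β - π/2) = -((β - θ) - π/2) by ring, Real.cos_neg, Real.cos_sub_pi_div_two]
    rw [this]
    exact mul_nonneg ht (Real.sin_nonneg_of_nonneg_of_le_pi (by linarith) (by linarith))
  · have : Real.cos (θ - (α + π/2)) = Real.sin (θ - α) := by
      rw [show θ - (α + π/2) = (θ - α) - π/2 by ring, Real.cos_sub_pi_div_two]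
    rw [this]
    exact mul_nonneg ht (Real.sin_nonneg_of_nonneg_of_le_pi (by linarith) (by linarith))
  · exact mul_nonneg ht (Real.cos_nonneg_of_mem_Icc ⟨by linarith, by linarith⟩)

lemma inCone_exists_angle {α β : ℝ} (hαβ : α ≤ β) (hw : β - α ≤ π) {z : ℂ} (hz : z ≠ 0)
    (h : InCone α β z) :
    ∃ θ : ℝ, α ≤ θ ∧ θ ≤ β ∧ z = (‖z‖ : ℂ) * Complex.exp ((θ : ℂ) * Complex.I) := by
  have hR : (0:ℝ) < ‖z‖ := norm_pos_iff.mpr hz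
  have hz' : z = (‖z‖ : ℂ) * Complex.exp ((z.arg : ℂ) * Complex.I) :=
    (Complex.norm_mul_exp_arg_mul_I z).symm
  set t := z.arg with ht
  have c1 : 0 ≤ Real.cos (t - (β - π/2)) := by
    have := h.1; rw [hz', hre_ray] at this; exact (mul_nonneg_iff_of_pos_left hR).mp this
  have c2 : 0 ≤ Real.cos (t - (α + π/2)) := by
    have := h.2.1; rw [hz', hre_ray] at this; exact (mul_nonneg_iff_of_pos_left hR).mp this
  have c3 : 0 ≤ Real.cos (t - (α + β)/2) := by
    have := h.2.2; rw [hz', hre_ray] at this; exact (mul_nonneg_iff_of_pos_left hR).mp this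
  have s1 : 0 ≤ Real.sin (β - t) := by
    have : Real.cos (t - (β - π/2)) = Real.sin (β - t) := by
      rw [show t - (β - π/2) = -((β - t) - π/2) by ring, Real.cos_neg, Real.cos_sub_pi_div_two]
    linarith [this ▸ c1]
  have s2 : 0 ≤ Real.sin (t - α) := by
    have : Real.cos (t - (α + π/2)) = Real.sin (t - α) := by
      rw [show t - (α + π/2) = (t - α) - π/2 by ring, Real.cos_sub_pi_div_two]
    linarith [this ▸ c2]
  set k : ℤ := ⌊(t - α) / (2 * π)⌋ with hk
  set δ : ℝ := (t - α) - k * (2 * π) with hδ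
  have h2π : (0:ℝ) < 2 * π := by positivity
  have hδ0 : 0 ≤ δ := Int.sub_floor_div_mul_nonneg (t - α) h2π
  have hδ2 : δ < 2 * π := Int.sub_floor_div_mul_lt (t - α) h2π
  have hsδ : 0 ≤ Real.sin δ := by
    have : Real.sin δ = Real.sin (t - α) := by
      rw [hδ, Real.sin_sub_int_mul_two_pi]
    linarith [this ▸ s2]
  have hδπ : δ ≤ π := by
    by_contra hcon
    push_neg at hcon
    have : Real.sin (δ - 2 * π) < 0 :=
      Real.sin_neg_of_neg_of_neg_pi_lt (by linarith) (by linarith [Real.pi_pos])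
    rw [show δ - 2*π = δ - (1:ℤ) * (2*π) by push_cast; ring, Real.sin_sub_int_mul_two_pi] at this
    linarith
  have hsΔδ : 0 ≤ Real.sin ((β - α) - δ) := by
    have : Real.sin ((β - α) - δ) = Real.sin (β - t) := by
      rw [show (β - α) - δ = (β - t) + k * (2 * π) by rw [hδ]; ring,
        Real.sin_add_int_mul_two_pi]
    linarith [this ▸ s1]
  have hδΔ : δ ≤ β - α := by
    by_contra hcon
    push_neg at hcon
    have h1 : Real.sin (δ - (β - α)) ≤ 0 := by
      rw [show δ - (β - α) = -((β - α) - δ) by ring, Real.sin_neg]; linarith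
    have h2 : δ - (β - α) = π := by
      by_contra hne
      have : 0 < Real.sin (δ - (β - α)) :=
        Real.sin_pos_of_pos_of_lt_pi (by linarith) (lt_of_le_of_ne (by linarith) hne)
      linarith
    have hΔ0 : β - α = 0 := by linarith
    have hδπ' : δ = π := by linarith
    have : Real.cos (t - (α + β)/2) = Real.cos δ := by
      rw [show t - (α + β)/2 = δ + k * (2 * π) by rw [hδ]; nlinarith [hΔ0],
        Real.cos_add_int_mul_two_pi]
    rw [this, hδπ', Real.cos_pi] at c3
    linarith
  refine ⟨α + δ, by linarith, by linarith, ?_⟩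
  have hexp : Complex.exp (((α + δ : ℝ) : ℂ) * Complex.I) = Complex.exp ((t : ℂ) * Complex.I) := by
    rw [show ((α + δ : ℝ) : ℂ) = (t : ℂ) - k * (2 * π) by push_cast [hδ]; ring]
    rw [sub_mul, Complex.exp_sub,
      show ((k : ℂ) * (2 * π)) * Complex.I = (k : ℂ) * (2 * π * Complex.I) by ring,
      Complex.exp_int_mul_two_pi_mul_I, div_one]
  rw [hexp]
  exact hz'

lemma quad_conj {ι : Type*} [Fintype ι] (T M : Matrix ι ι ℂ) (v : ι → ℂ) :
    star v ⬝ᵥ (Tᴴ * M * T).mulVec v = star (T.mulVec v) ⬝ᵥ M.mulVec (T.mulVec v) := by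
  rw [mul_assoc, ← Matrix.mulVec_mulVec, Matrix.dotProduct_mulVec, ← Matrix.star_mulVec,
    ← Matrix.mulVec_mulVec, Matrix.dotProduct_mulVec]

lemma quad_reindex {ι κ : Type*} [Fintype ι] [Fintype κ] [DecidableEq ι] [DecidableEq κ]
    (e : κ ≃ ι) (M : Matrix κ κ ℂ) (u : ι → ℂ) :
    star u ⬝ᵥ (Matrix.reindex e e M).mulVec u = star (u ∘ e) ⬝ᵥ M.mulVec (u ∘ e) := by
  simp only [Matrix.reindex_apply, Matrix.mulVec, dotProduct, Matrix.submatrix_apply,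
    Pi.star_apply, Function.comp_apply]
  rw [← e.sum_comp]
  refine Finset.sum_congr rfl fun i _ => ?_
  rw [e.symm_apply_apply, ← e.sum_comp]
  simp

lemma mulVec_reindex {ι κ : Type*} [Fintype ι] [Fintype κ] [DecidableEq ι] [DecidableEq κ]
    (e : κ ≃ ι) (M : Matrix κ κ ℂ) (u : ι → ℂ) (i : ι) :
    (Matrix.reindex e e M).mulVec u i = M.mulVec (u ∘ e) (e.symm i) := by
  simp only [Matrix.reindex_apply, Matrix.mulVec, dotProduct, Matrix.submatrix_apply,
    Function.comp_apply]
  rw [← e.sum_comp]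
  simp

lemma fromBlocks_quad {k r : ℕ} (Cs : Matrix (Fin r) (Fin r) ℂ) (u : Fin k ⊕ Fin r → ℂ) :
    star u ⬝ᵥ (Matrix.fromBlocks (0 : Matrix (Fin k) (Fin k) ℂ) 0 0 Cs).mulVec u
      = star (u ∘ Sum.inr) ⬝ᵥ Cs.mulVec (u ∘ Sum.inr) := by
  simp [Matrix.mulVec, dotProduct, Fintype.sum_sum_type]

lemma fromBlocks_mulVec_zero {k r : ℕ} (Cs : Matrix (Fin r) (Fin r) ℂ) (u : Fin k ⊕ Fin r → ℂ)
    (h : u ∘ Sum.inr = 0) :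
    (Matrix.fromBlocks (0 : Matrix (Fin k) (Fin k) ℂ) 0 0 Cs).mulVec u = 0 := by
  funext i
  cases i with
  | inl a => simp [Matrix.mulVec, dotProduct, Fintype.sum_sum_type]
  | inr c =>
    simp [Matrix.mulVec, dotProduct, Fintype.sum_sum_type]
    refine Finset.sum_eq_zero fun j _ => ?_
    have : u (Sum.inr j) = 0 := congrFun h j
    simp [this]

lemma star_dot_comm {ι : Type*} [Fintype ι] (x y : ι → ℂ) :
    star y ⬝ᵥ x = (starRingEnd ℂ) (star x ⬝ᵥ y) := by
  simp [dotProduct, map_sum, mul_comm]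

lemma sectorial_quad_ne {ι : Type*} [Fintype ι] {Cs : Matrix ι ι ℂ} (h : Sectorial Cs)
    {u : ι → ℂ} (hu : u ≠ 0) : star u ⬝ᵥ Cs.mulVec u ≠ 0 := by
  intro h0
  set s : ℝ := ∑ i, Complex.normSq (u i) with hs
  have hspos : 0 < s := by
    obtain ⟨i, hi⟩ := Function.ne_iff.mp hu
    exact Finset.sum_pos' (fun j _ => Complex.normSq_nonneg _)
      ⟨i, Finset.mem_univ i, by simpa [Complex.normSq_pos] using hi⟩
  have hdot : star u ⬝ᵥ u = (s : ℂ) := by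
    simp [dotProduct, hs, Complex.normSq_eq_conj_mul_self]
  set c : ℝ := (Real.sqrt s)⁻¹ with hc
  have hc2 : c^2 * s = 1 := by
    rw [hc]
    rw [show ((Real.sqrt s)⁻¹)^2 = ((Real.sqrt s)^2)⁻¹ by rw [inv_pow]]
    rw [Real.sq_sqrt hspos.le]
    field_simp
  set x : ι → ℂ := (c : ℂ) • u with hx
  apply h
  refine ⟨x, ?_, ?_⟩
  · have hxx : star x ⬝ᵥ x = ((c:ℂ))^2 * (star u ⬝ᵥ u) := by
      rw [hx, star_smul, smul_dotProduct, dotProduct_smul]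
      simp only [Complex.conj_ofReal, smul_eq_mul, star_trivial, RCLike.star_def]
      ring
    rw [hxx, hdot]
    have : (((c^2 * s : ℝ)) : ℂ) = 1 := by rw [hc2]; norm_num
    push_cast at this
    linear_combination this
  · have hxx : star x ⬝ᵥ Cs.mulVec x = ((c:ℂ))^2 * (star u ⬝ᵥ Cs.mulVec u) := by
      rw [hx, Matrix.mulVec_smul, star_smul, smul_dotProduct, dotProduct_smul]
      simp only [Complex.conj_ofReal, smul_eq_mul, star_trivial, RCLike.star_def]
      ring
    rw [hxx, h0, mul_zero]

lemma gsd_quad (n0 m p : ℕ) (θ : Fin m → ℝ) (θ0 : ℝ)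
    (u : ((Fin n0 ⊕ Fin m) ⊕ (Fin 2 × Fin p)) → ℂ) :
    star u ⬝ᵥ (gsdMat n0 m p θ θ0).mulVec u
    = (∑ k : Fin m, (Complex.normSq (u (.inl (.inr k))) : ℂ) * Complex.exp ((θ k : ℂ) * Complex.I))
    + ∑ j : Fin p, Complex.exp ((θ0 : ℂ) * Complex.I) *
        ((starRingEnd ℂ) (u (.inr (0, j))) * u (.inr (0, j))
          + 2 * (starRingEnd ℂ) (u (.inr (0, j))) * u (.inr (1, j))
          + (starRingEnd ℂ) (u (.inr (1, j))) * u (.inr (1, j))) := by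
  simp [gsdMat, Matrix.mulVec, dotProduct, Fintype.sum_sum_type, Fintype.sum_prod_type,
    Matrix.blockDiagonal_apply, Matrix.diagonal_apply, Fin.sum_univ_two, Finset.mul_sum,
    Finset.sum_add_distrib, mul_comm, mul_left_comm, mul_assoc, Complex.normSq_eq_conj_mul_self]
  rw [← Finset.sum_add_distrib]
  exact Finset.sum_congr rfl fun j _ => by ring

lemma hasPhases_width {ι : Type*} [Fintype ι] [DecidableEq ι] {r : ℕ} (hr : 0 < r)
    {C : Matrix ι ι ℂ} {φ : Fin r → ℝ} (h : HasPhases C φ) :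
    φ ⟨0, hr⟩ - φ ⟨r - 1, by omega⟩ ≤ π := by
  obtain ⟨hmono, n0, m, p, θ, θ0, e, T, hT, hθ, hC, hmul⟩ := h
  have hφmem : ∀ j : Fin r, θ0 - π/2 ≤ φ j ∧ φ j ≤ θ0 + π/2 := by
    intro j
    have hj : φ j ∈ Multiset.map θ Finset.univ.val + Multiset.replicate p (θ0 + π/2)
        + Multiset.replicate p (θ0 - π/2) := by
      rw [← hmul]
      exact Multiset.mem_map_of_mem φ (Finset.mem_univ j)
    rcases Multiset.mem_add.mp hj with hj' | hj'
    · rcases Multiset.mem_add.mp hj' with hj'' | hj''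
      · obtain ⟨k, _, hk⟩ := Multiset.mem_map.mp hj''
        rw [← hk]; exact hθ k
      · have := (Multiset.eq_of_mem_replicate hj'')
        constructor <;> rw [this] <;> linarith [Real.pi_pos]
    · have := (Multiset.eq_of_mem_replicate hj')
      constructor <;> rw [this] <;> linarith [Real.pi_pos]
  linarith [(hφmem ⟨0, hr⟩).2, (hφmem ⟨r - 1, by omega⟩).1]

lemma hasPhases_inCone {ι : Type*} [Fintype ι] [DecidableEq ι] {r : ℕ} (hr : 0 < r)
    {C : Matrix ι ι ℂ} {φ : Fin r → ℝ} (h : HasPhases C φ) (v : ι → ℂ) :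
    InCone (φ ⟨r - 1, by omega⟩) (φ ⟨0, hr⟩) (star v ⬝ᵥ C.mulVec v) := by
  obtain ⟨hmono, n0, m, p, θ, θ0, e, T, hT, hθ, hC, hmul⟩ := h
  set α := φ ⟨r - 1, by omega⟩ with hα
  set β := φ ⟨0, hr⟩ with hβ
  have hbnd : ∀ j : Fin r, α ≤ φ j ∧ φ j ≤ β := by
    intro j
    constructor
    · exact hmono (by have := j.isLt; simp only [Fin.le_def]; omega)
    · exact hmono (by simp only [Fin.le_def]; omega)
  -- every phase value is between θ0 - π/2 and θ0 + π/2
  have hφmem : ∀ j : Fin r, θ0 - π/2 ≤ φ j ∧ φ j ≤ θ0 + π/2 := by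
    intro j
    have hj : φ j ∈ Multiset.map θ Finset.univ.val + Multiset.replicate p (θ0 + π/2)
        + Multiset.replicate p (θ0 - π/2) := by
      rw [← hmul]
      exact Multiset.mem_map_of_mem φ (Finset.mem_univ j)
    rcases Multiset.mem_add.mp hj with hj' | hj'
    · rcases Multiset.mem_add.mp hj' with hj'' | hj''
      · obtain ⟨k, _, hk⟩ := Multiset.mem_map.mp hj''
        rw [← hk]; exact hθ k
      · have := (Multiset.eq_of_mem_replicate hj'')
        constructor <;> rw [this] <;> linarith [Real.pi_pos]
    · have := (Multiset.eq_of_mem_replicate hj')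
      constructor <;> rw [this] <;> linarith [Real.pi_pos]
  have hwidth : β - α ≤ π := by
    have h1 := hφmem ⟨r - 1, by omega⟩
    have h2 := hφmem ⟨0, hr⟩
    rw [← hα] at h1; rw [← hβ] at h2
    linarith [h1.1, h2.2]
  have hθbnd : ∀ k : Fin m, α ≤ θ k ∧ θ k ≤ β := by
    intro k
    have hk : θ k ∈ Multiset.map φ Finset.univ.val := by
      rw [hmul]
      refine Multiset.mem_add.mpr (Or.inl (Multiset.mem_add.mpr (Or.inl ?_)))
      exact Multiset.mem_map_of_mem θ (Finset.mem_univ k)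
    obtain ⟨j, _, hj⟩ := Multiset.mem_map.mp hk
    rw [← hj]; exact hbnd j
  have hp : 0 < p → α = θ0 - π/2 ∧ β = θ0 + π/2 := by
    intro hppos
    have hmem1 : (θ0 + π/2) ∈ Multiset.map φ Finset.univ.val := by
      rw [hmul]
      refine Multiset.mem_add.mpr (Or.inl (Multiset.mem_add.mpr (Or.inr ?_)))
      exact Multiset.mem_replicate.mpr ⟨by omega, rfl⟩
    have hmem2 : (θ0 - π/2) ∈ Multiset.map φ Finset.univ.val := by
      rw [hmul]
      exact Multiset.mem_add.mpr (Or.inr (Multiset.mem_replicate.mpr ⟨by omega, rfl⟩))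
    obtain ⟨j1, _, hj1⟩ := Multiset.mem_map.mp hmem1
    obtain ⟨j2, _, hj2⟩ := Multiset.mem_map.mp hmem2
    constructor
    · have h6 : α ≤ θ0 - π/2 := le_of_le_of_eq (hbnd j2).1 hj2
      have h7 : θ0 - π/2 ≤ α := (hφmem ⟨r - 1, by omega⟩).1
      linarith
    · have h6 : θ0 + π/2 ≤ β := le_of_eq_of_le hj1.symm (hbnd j1).2
      have h7 : β ≤ θ0 + π/2 := (hφmem ⟨0, hr⟩).2
      linarith
  rw [hC, quad_conj, quad_reindex, gsd_quad]
  apply inCone_add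
  · apply inCone_sum
    intro k _
    exact inCone_ray _ (Complex.normSq_nonneg _) (hθbnd k).1 (hθbnd k).2 hwidth
  · apply inCone_sum
    intro j _
    obtain ⟨hαeq, hβeq⟩ := hp j.pos
    set a := ((T.mulVec v) ∘ e) (Sum.inr (0, j)) with ha
    set b := ((T.mulVec v) ∘ e) (Sum.inr (1, j)) with hb
    set sE : ℂ := (starRingEnd ℂ) a * a + 2 * (starRingEnd ℂ) a * b + (starRingEnd ℂ) b * b
      with hsE
    have hres : 0 ≤ sE.re := by
      rw [hsE]
      simp only [Complex.add_re, Complex.mul_re, Complex.mul_im, Complex.conj_re,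
        Complex.conj_im, Complex.re_ofNat, Complex.im_ofNat]
      nlinarith [sq_nonneg (a.re + b.re), sq_nonneg (a.im + b.im)]
    have hcone : ∀ x : ℝ, x = θ0 → 0 ≤ hre x (Complex.exp ((θ0 : ℂ) * Complex.I) * sE) := by
      intro x hx
      rw [hx, hre_exp_mul]
      exact hres
    exact ⟨hcone _ (by rw [hβeq]; ring), hcone _ (by rw [hαeq]; ring),
      hcone _ (by rw [hαeq, hβeq]; ring)⟩

end AuxSmallPhase


/-- sufficiency in the small phase theorem: if `A` is quasi-sectorial, `B`
is semi-sectorial, `φ̄(A) + φ̄(B) < π` and `φ̲(A) + φ̲(B) > -π`, then `I + AB` is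
invertible. -/
theorem small_phase_sufficiency {n rA rB : ℕ} (A B : Matrix (Fin n) (Fin n) ℂ)
    (hA : QuasiSectorial A) (hB : SemiSectorial B)
    (hrA : 0 < rA) (hrB : 0 < rB)
    (φA : Fin rA → ℝ) (φB : Fin rB → ℝ)
    (hφA : HasPhases A φA) (hφB : HasPhases B φB)
    (hup : φA ⟨0, hrA⟩ + φB ⟨0, hrB⟩ < π)
    (hlo : -π < φA ⟨rA - 1, by omega⟩ + φB ⟨rB - 1, by omega⟩) :
    IsUnit (1 + A * B).det := by
  by_contra hdet
  have hdet0 : (1 + A * B).det = 0 := by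
    by_contra h0; exact hdet (isUnit_iff_ne_zero.mpr h0)
  obtain ⟨x, hx0, hx⟩ := (Matrix.exists_mulVec_eq_zero_iff).mpr hdet0
  have h1 : x + (A * B).mulVec x = 0 := by
    rw [Matrix.add_mulVec, Matrix.one_mulVec] at hx; exact hx
  set y := B.mulVec x with hy
  have hAy : A.mulVec y = -x := by
    rw [hy, Matrix.mulVec_mulVec]
    exact eq_neg_of_add_eq_zero_left (by rw [add_comm]; exact h1)
  set w := star y ⬝ᵥ A.mulVec y with hwdef
  set z := star x ⬝ᵥ B.mulVec x with hzdef
  have hwz : w = -(starRingEnd ℂ) z := by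
    rw [hwdef, hAy, dotProduct_neg, star_dot_comm x y, hzdef]
  -- w ≠ 0 via quasi-sectoriality
  obtain ⟨kk, rr, eA, U, Cs, hU1, hU2, hCs, hAeq⟩ := hA
  have hAeq' : A = (Uᴴ)ᴴ * (Matrix.reindex eA eA
      (Matrix.fromBlocks (0 : Matrix (Fin kk) (Fin kk) ℂ) 0 0 Cs)) * Uᴴ := by
    rw [Matrix.conjTranspose_conjTranspose]; exact hAeq
  have hween : w = star (((Uᴴ.mulVec y) ∘ eA) ∘ Sum.inr)
      ⬝ᵥ Cs.mulVec (((Uᴴ.mulVec y) ∘ eA) ∘ Sum.inr) := by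
    rw [hwdef, hAeq', quad_conj, quad_reindex, fromBlocks_quad]
  have hu2 : ((Uᴴ.mulVec y) ∘ eA) ∘ Sum.inr ≠ 0 := by
    intro hzero
    have hMu : (Matrix.fromBlocks (0 : Matrix (Fin kk) (Fin kk) ℂ) 0 0 Cs).mulVec
        ((Uᴴ.mulVec y) ∘ eA) = 0 := fromBlocks_mulVec_zero _ _ hzero
    have hRu : (Matrix.reindex eA eA (Matrix.fromBlocks (0 : Matrix (Fin kk) (Fin kk) ℂ) 0 0 Cs)).mulVec
        (Uᴴ.mulVec y) = 0 := by
      funext i; rw [mulVec_reindex, hMu]; rfl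
    have hA0 : A.mulVec y = 0 := by
      rw [hAeq, ← Matrix.mulVec_mulVec, ← Matrix.mulVec_mulVec, hRu, Matrix.mulVec_zero]
    rw [hAy] at hA0
    exact hx0 (neg_eq_zero.mp hA0)
  have hwne : w ≠ 0 := by rw [hween]; exact sectorial_quad_ne hCs hu2
  have hzne : z ≠ 0 := by
    intro h0
    apply hwne
    rw [hwz, h0, map_zero, neg_zero]
  -- cones and angles
  have hconeA := hasPhases_inCone hrA hφA y
  have hconeB := hasPhases_inCone hrB hφB x
  have hwidthA := hasPhases_width hrA hφA
  have hwidthB := hasPhases_width hrB hφB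
  have hmA : φA ⟨rA - 1, by omega⟩ ≤ φA ⟨0, hrA⟩ := hφA.1 (by simp [Fin.le_def])
  have hmB : φB ⟨rB - 1, by omega⟩ ≤ φB ⟨0, hrB⟩ := hφB.1 (by simp [Fin.le_def])
  obtain ⟨θa, ha1, ha2, ha3⟩ := inCone_exists_angle hmA hwidthA hwne hconeA
  obtain ⟨θb, hb1, hb2, hb3⟩ := inCone_exists_angle hmB hwidthB hzne hconeB
  have habs : ‖w‖ = ‖z‖ := by
    rw [hwz, norm_neg, Complex.norm_conj]
  have habsne : ((‖w‖ : ℝ) : ℂ) ≠ 0 := by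
    simpa using hwne
  have hkey : Complex.exp ((θa : ℂ) * Complex.I)
      = Complex.exp (((π - θb : ℝ) : ℂ) * Complex.I) := by
    have e1 : (starRingEnd ℂ) z
        = (‖z‖ : ℂ) * Complex.exp (-((θb : ℂ) * Complex.I)) := by
      conv_lhs => rw [hb3, _root_.map_mul, Complex.conj_ofReal, ← Complex.exp_conj,
        _root_.map_mul, Complex.conj_ofReal, Complex.conj_I, mul_neg]
    have e2 : (‖w‖ : ℂ) * Complex.exp ((θa : ℂ) * Complex.I)
        = (‖w‖ : ℂ) * Complex.exp (((π - θb : ℝ) : ℂ) * Complex.I) := by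
      rw [← ha3]
      calc w = -((starRingEnd ℂ) z) := hwz
        _ = -((‖z‖ : ℂ) * Complex.exp (-((θb:ℂ) * Complex.I))) := by rw [e1]
        _ = -((‖w‖ : ℂ) * Complex.exp (-((θb:ℂ) * Complex.I))) := by rw [habs]
        _ = (‖w‖ : ℂ) *
            (Complex.exp ((π:ℂ) * Complex.I) * Complex.exp (-((θb:ℂ) * Complex.I))) := by
              rw [Complex.exp_pi_mul_I]; ring
        _ = (‖w‖ : ℂ) * Complex.exp (((π - θb : ℝ) : ℂ) * Complex.I) := by
              rw [← Complex.exp_add]; congr 2; push_cast; ring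
    exact mul_left_cancel₀ habsne e2
  obtain ⟨nn, hnn⟩ := Complex.exp_eq_exp_iff_exists_int.mp hkey
  have hreal : θa = π - θb + nn * (2 * π) := by
    have him := congrArg Complex.im hnn
    simpa using him
  have hπ := Real.pi_pos
  have hs1 : θa + θb < π := by
    have := hup
    linarith [ha2, hb2]
  have hs2 : -π < θa + θb := by
    have hlo' : -π < φA ⟨rA - 1, by omega⟩ + φB ⟨rB - 1, by omega⟩ := hlo
    linarith [ha1, hb1]
  have hn1 : (nn : ℝ) < 0 := by nlinarith
  have hn2 : (-1 : ℝ) < (nn : ℝ) := by nlinarith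
  have hi1 : (-1 : ℤ) < nn := by exact_mod_cast hn2
  have hi2 : nn < 0 := by exact_mod_cast hn1
  omega

end
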